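/- Every semantically deterministic safety automaton is determinisable by pruning: if $\mathcal{S}$ is a complete nondeterministic safety automaton over a finite alphabet in which every transition is language-preserving, then $\mathcal{S}$ contains a deterministic subautomaton $\mathcal{D}$ (obtained by selecting, for each state and letter, one language-preserving outgoing transition) with $\mathcal{L}(\mathcal{D}) = \mathcal{L}(\mathcal{S})$. -/

import Mathlib

/-- Prepend a letter to an infinite word. -/
def wcons {A : Type*} (a : A) (w : ℕ → A) : ℕ → A
  | 0 => a
  | n + 1 => w n

/-- The safety language of state `q`: infinite words admitting a run from `q` that
never visits the rejecting sink `bad`. -/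
def SafeLang {Q A : Type*} (δ : Q → A → Q → Prop) (bad : Q) (q : Q) : Set (ℕ → A) :=
  {w | ∃ ρ : ℕ → Q, ρ 0 = q ∧ (∀ i, δ (ρ i) (w i) (ρ (i + 1))) ∧ ∀ i, ρ i ≠ bad}

/-- The run of a deterministic transition function `f` from `q` on `w`. -/
def detRun {Q A : Type*} (f : Q → A → Q) (q : Q) (w : ℕ → A) : ℕ → Q
  | 0 => q
  | n + 1 => f (detRun f q w n) (w n)

/-- Every semantically deterministic safety automaton is determinisable by pruning:
some choice of one outgoing transition per state and letter yields a deterministic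
subautomaton recognising the same language. -/
theorem stmt6 {Q A : Type*} [Fintype Q] [Fintype A]
    (δ : Q → A → Q → Prop) (bad : Q) (q0 : Q)
    (hcomplete : ∀ q a, ∃ q', δ q a q')
    (hsink : ∀ a q', δ bad a q' ↔ q' = bad)
    (hSD : ∀ p a q, δ p a q → SafeLang δ bad q = {w | wcons a w ∈ SafeLang δ bad p}) :
    ∃ f : Q → A → Q, (∀ q a, δ q a (f q a)) ∧
      {w : ℕ → A | ∀ i, detRun f q0 w i ≠ bad} = SafeLang δ bad q0 := by
  choose f hf using hcomplete
  refine ⟨f, hf, ?_⟩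
  ext w
  simp only [Set.mem_setOf_eq]
  constructor
  · intro h
    exact ⟨detRun f q0 w, rfl, fun i => hf _ _, h⟩
  · intro hw i
    have key : ∀ i, (fun n => w (i + n)) ∈ SafeLang δ bad (detRun f q0 w i) := by
      intro i
      induction i with
      | zero => simpa [detRun] using hw
      | succ i ih =>
        have hstep := hSD _ (w i) _ (hf (detRun f q0 w i) (w i))
        show (fun n => w (i + 1 + n)) ∈ SafeLang δ bad (f (detRun f q0 w i) (w i))
        rw [hstep]
        have heq : wcons (w i) (fun n => w (i + 1 + n)) = fun n => w (i + n) := by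
          funext n
          cases n with
          | zero => simp [wcons]
          | succ n => simp [wcons]; ring_nf
        simp only [Set.mem_setOf_eq, heq]
        exact ih
    obtain ⟨ρ, h0, _, hnb⟩ := key i
    intro hb
    exact hnb 0 (h0.trans hb)
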